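/- Let e be a primitive integral future-pointing null vector and let g ∈ O⁺(ℤ). If g maps the horoball U_e = {x ∈ C⁺ : B(x,e) ≤ (1/2)·√(B(x,x))} into itself (i.e., g(x) ∈ U_e for every x ∈ U_e), then g(e) = e. -/

import Mathlib

/-!
The image `f = g e` is again a future-pointing null vector, and `g` carries `U_e` onto `U_f`, so
the hypothesis says `U_f ⊆ U_e`. For future null `e` and `f`,
`2 e₀ f₀ B(e,f) = ∑ᵢ (f₀ eᵢ - e₀ fᵢ)² ≥ 0`; if `B(e,f) > 0`, the points `t f + e` with `t`
large lie in `U_f` but not in `U_e`. Hence `B(e,f) = 0`, which forces `f = r e` with `r > 0`,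
and `r = 1` because both `r e = g e` and `r⁻¹ e = g⁻¹ e` are integral while `e` is primitive.
-/

/-- The Minkowski bilinear form of signature `(1,n)` on `ℝ^{n+1}`:
`B x y = x₀ y₀ - ∑_{i=1}^n xᵢ yᵢ`. -/
def B (n : ℕ) (x y : Fin (n + 1) → ℝ) : ℝ :=
  x 0 * y 0 - ∑ i : Fin n, x i.succ * y i.succ

/-- The integral vector `z ∈ ℤ^{n+1}` viewed inside `V = ℝ^{n+1}`. -/
def toReal (n : ℕ) (z : Fin (n + 1) → ℤ) : Fin (n + 1) → ℝ := fun i => (z i : ℝ)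

/-- The integral lattice `ℤ^{n+1} ⊆ ℝ^{n+1}`. -/
def intLattice (n : ℕ) : Set (Fin (n + 1) → ℝ) := {x | ∀ i, ∃ m : ℤ, x i = (m : ℝ)}

/-- The open positive cone `C⁺ = {x : B(x,x) > 0, x₀ > 0}`. -/
def posCone (n : ℕ) : Set (Fin (n + 1) → ℝ) := {x | 0 < B n x x ∧ 0 < x 0}

/-- Membership in `O⁺(ℤ)`: a linear automorphism of `V` preserving the Minkowski form,
mapping the lattice `ℤ^{n+1}` onto itself and the open positive cone onto itself. -/
def InOplusZ (n : ℕ) (g : (Fin (n + 1) → ℝ) ≃ₗ[ℝ] (Fin (n + 1) → ℝ)) : Prop :=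
  (∀ x y, B n (g x) (g y) = B n x y) ∧
  g '' intLattice n = intLattice n ∧
  g '' posCone n = posCone n

/-- The horoball `U_e = {x ∈ C⁺ : B(x,e) ≤ (1/2)√(B(x,x))}` at a null vector `e`. -/
def horoball (n : ℕ) (e : Fin (n + 1) → ℝ) : Set (Fin (n + 1) → ℝ) :=
  {x ∈ posCone n | B n x e ≤ (1 / 2) * Real.sqrt (B n x x)}

open Filter Topology

section Minkowski

variable {n : ℕ}

lemma B_comm (x y : Fin (n + 1) → ℝ) : B n x y = B n y x := by
  simp only [B, mul_comm]

lemma B_smul_add_left (a : ℝ) (x y w : Fin (n + 1) → ℝ) :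
    B n (a • x + y) w = a * B n x w + B n y w := by
  simp only [B, Pi.add_apply, Pi.smul_apply, smul_eq_mul, add_mul, mul_sub, Finset.sum_add_distrib,
    Finset.mul_sum, mul_assoc]
  ring

lemma B_smul_add_self (a : ℝ) (x y : Fin (n + 1) → ℝ) :
    B n (a • x + y) (a • x + y) = a ^ 2 * B n x x + 2 * a * B n x y + B n y y := by
  rw [B_smul_add_left, B_comm x, B_comm y, B_smul_add_left, B_smul_add_left, B_comm y x]
  ring

lemma eq_zero_of_B_self_eq_zero {x : Fin (n + 1) → ℝ} (hx : B n x x = 0) (hx0 : x 0 = 0) :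
    x = 0 := by
  have hsum : ∑ i : Fin n, x i.succ * x i.succ = 0 := by
    simp only [B, hx0, mul_zero, zero_sub, neg_eq_zero] at hx
    exact hx
  funext i
  induction i using Fin.cases with
  | zero => exact hx0
  | succ i =>
    exact mul_self_eq_zero.1 <| (Finset.sum_eq_zero_iff_of_nonneg
      fun j _ => mul_self_nonneg (x j.succ)).1 hsum i (Finset.mem_univ i)

/-- The identity behind the reverse Cauchy–Schwarz inequality for null vectors. -/
lemma two_mul_mul_B_eq_sum_sq {x y : Fin (n + 1) → ℝ} (hx : B n x x = 0) (hy : B n y y = 0) :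
    2 * (x 0 * y 0) * B n x y = ∑ i : Fin n, (y 0 * x i.succ - x 0 * y i.succ) ^ 2 := by
  have hx' : ∑ i : Fin n, x i.succ * x i.succ = x 0 * x 0 := by unfold B at hx; linarith
  have hy' : ∑ i : Fin n, y i.succ * y i.succ = y 0 * y 0 := by unfold B at hy; linarith
  have hexpand : ∑ i : Fin n, (y 0 * x i.succ - x 0 * y i.succ) ^ 2 =
      y 0 ^ 2 * ∑ i : Fin n, x i.succ * x i.succ + x 0 ^ 2 * ∑ i : Fin n, y i.succ * y i.succ
        - 2 * (x 0 * y 0) * ∑ i : Fin n, x i.succ * y i.succ := by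
    simp only [Finset.mul_sum, ← Finset.sum_add_distrib, ← Finset.sum_sub_distrib]
    exact Finset.sum_congr rfl fun i _ => by ring
  rw [hexpand, hx', hy', B]
  ring

lemma B_nonneg_of_null {x y : Fin (n + 1) → ℝ} (hx : B n x x = 0) (hy : B n y y = 0)
    (hx0 : 0 < x 0) (hy0 : 0 < y 0) : 0 ≤ B n x y := by
  have hsum := two_mul_mul_B_eq_sum_sq hx hy
  have : 0 ≤ 2 * (x 0 * y 0) * B n x y := hsum ▸ Finset.sum_nonneg fun i _ => sq_nonneg _
  exact nonneg_of_mul_nonneg_right this (by positivity)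

lemma eq_smul_of_B_eq_zero {x y : Fin (n + 1) → ℝ} (hx : B n x x = 0) (hy : B n y y = 0)
    (hx0 : x 0 ≠ 0) (hxy : B n x y = 0) : y = (y 0 / x 0) • x := by
  have hsum := two_mul_mul_B_eq_sum_sq hx hy
  rw [hxy, mul_zero, eq_comm, Finset.sum_eq_zero_iff_of_nonneg fun i _ => sq_nonneg _] at hsum
  have hprop : ∀ i, y 0 * x i = x 0 * y i := by
    intro i
    induction i using Fin.cases with
    | zero => ring
    | succ i => exact sub_eq_zero.1 (pow_eq_zero_iff two_ne_zero |>.1 (hsum i (Finset.mem_univ i)))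
  funext i
  rw [Pi.smul_apply, smul_eq_mul, div_mul_eq_mul_div, hprop i, mul_div_cancel_left₀ _ hx0]

end Minkowski

section Cone

variable {n : ℕ}

lemma closure_posCone_subset : closure (posCone n) ⊆ {x | 0 ≤ x 0} :=
  closure_minimal (fun _ hx => hx.2.le) (isClosed_le continuous_const (continuous_apply 0))

lemma mem_closure_posCone {e : Fin (n + 1) → ℝ} (he : 0 ≤ B n e e) (he0 : 0 < e 0) :
    e ∈ closure (posCone n) := by
  set δ : Fin (n + 1) → ℝ := Pi.single 0 1
  have hδδ : B n δ δ = 1 := by simp [δ, B, Fin.succ_ne_zero]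
  have hδe : B n δ e = e 0 := by simp [δ, B, Fin.succ_ne_zero]
  have hlim : Tendsto (fun ε : ℝ => ε • δ + e) (𝓝[>] 0) (𝓝 e) := by
    have hcont : Continuous fun ε : ℝ => ε • δ + e := by fun_prop
    exact (hcont.tendsto' 0 e (by simp)).mono_left nhdsWithin_le_nhds
  refine mem_closure_of_tendsto hlim (eventually_nhdsWithin_of_forall fun ε (hε : 0 < ε) => ?_)
  refine ⟨?_, ?_⟩
  · rw [B_smul_add_self, hδδ, hδe]
    positivity
  · simp only [δ, Pi.add_apply, Pi.smul_apply, Pi.single_eq_same, smul_eq_mul, mul_one]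
    positivity

lemma apply_zero_pos_of_null (g : (Fin (n + 1) → ℝ) ≃ₗ[ℝ] (Fin (n + 1) → ℝ))
    (hg : Set.MapsTo g (posCone n) (posCone n)) {e : Fin (n + 1) → ℝ} (he : B n e e = 0)
    (he0 : 0 < e 0) (hge : B n (g e) (g e) = 0) : 0 < g e 0 := by
  have hcont : Continuous g := g.toLinearMap.continuous_of_finiteDimensional
  have hnonneg : 0 ≤ g e 0 :=
    closure_posCone_subset (map_mem_closure hcont (mem_closure_posCone he.ge he0) hg)
  refine hnonneg.lt_of_ne fun h => he0.ne' ?_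
  have : e = 0 := g.injective <| by rw [eq_zero_of_B_self_eq_zero hge h.symm, map_zero]
  rw [this, Pi.zero_apply]

end Cone

section Horoball

variable {n : ℕ}

lemma apply_mem_horoball_iff (g : (Fin (n + 1) → ℝ) ≃ₗ[ℝ] (Fin (n + 1) → ℝ))
    (hB : ∀ x y, B n (g x) (g y) = B n x y) (hC : g '' posCone n = posCone n)
    {x e : Fin (n + 1) → ℝ} : g x ∈ horoball n (g e) ↔ x ∈ horoball n e := by
  have hcone : g x ∈ posCone n ↔ x ∈ posCone n := by
    conv_lhs => rw [← hC]
    exact g.injective.mem_set_image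
  simp only [horoball, Set.mem_ofPred_eq, hB, hcone]

lemma le_half_mul_sqrt_iff {a b : ℝ} (ha : 0 ≤ a) (hb : 0 ≤ b) :
    a ≤ 1 / 2 * √b ↔ 4 * a ^ 2 ≤ b := by
  rw [show 4 * a ^ 2 = (2 * a) ^ 2 by ring, ← Real.le_sqrt (by positivity) hb]
  constructor <;> intro h <;> linarith

/-- With `c = B(e,f)`, the point `y = t f + e` has `B(y,f) = c`, `B(y,e) = t c` and
`B(y,y) = 2 t c`, so `y ∈ U_f` iff `2c ≤ t` and `y ∈ U_e` iff `t c ≤ 1/2`. -/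
lemma not_horoball_subset_horoball {e f : Fin (n + 1) → ℝ} (he : B n e e = 0) (hf : B n f f = 0)
    (he0 : 0 < e 0) (hf0 : 0 < f 0) (hc : 0 < B n e f) : ¬ horoball n f ⊆ horoball n e := by
  intro hsub
  set c := B n e f
  set t := 2 * c + 1 / c
  have htc : t * c = 2 * c ^ 2 + 1 := by rw [add_mul, one_div, inv_mul_cancel₀ hc.ne']; ring
  have hyy : B n (t • f + e) (t • f + e) = 2 * (t * c) := by
    rw [B_smul_add_self, hf, he, B_comm]
    ring
  have hyf : B n (t • f + e) f = c := by rw [B_smul_add_left, hf, mul_zero, zero_add]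
  have hye : B n (t • f + e) e = t * c := by rw [B_smul_add_left, he, B_comm, add_zero]
  have hcone : t • f + e ∈ posCone n := by
    refine ⟨by rw [hyy, htc]; positivity, ?_⟩
    simp only [Pi.add_apply, Pi.smul_apply, smul_eq_mul]
    positivity
  have hmem : t • f + e ∈ horoball n f := by
    refine ⟨hcone, ?_⟩
    rw [hyf, hyy, le_half_mul_sqrt_iff hc.le (by positivity), htc]
    linarith
  have hle := (hsub hmem).2
  rw [hye, hyy, le_half_mul_sqrt_iff (by positivity) (by positivity), htc] at hle
  nlinarith [sq_nonneg c]

end Horoball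

section Lattice

variable {n : ℕ}

lemma exists_int_eq_of_smul_mem_intLattice {z : Fin (n + 1) → ℤ} (hprim : Finset.univ.gcd z = 1)
    {r : ℝ} (h : r • toReal n z ∈ intLattice n) : ∃ m : ℤ, r = m := by
  choose m hm using h
  obtain ⟨a, ha⟩ := Finset.gcd_eq_sum_mul Finset.univ z
  refine ⟨∑ i, m i * a i, ?_⟩
  have hr : r = r * ((Finset.univ.gcd z : ℤ) : ℝ) := by rw [hprim, Int.cast_one, mul_one]
  rw [hr, ha]
  push_cast
  simp only [Finset.mul_sum, ← mul_assoc]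
  exact Finset.sum_congr rfl fun i _ => by rw [← hm i]; rfl

lemma eq_one_of_smul_mem_intLattice {z : Fin (n + 1) → ℤ} (hprim : Finset.univ.gcd z = 1)
    {r : ℝ} (hr : 0 < r) (h : r • toReal n z ∈ intLattice n)
    (h' : r⁻¹ • toReal n z ∈ intLattice n) : r = 1 := by
  obtain ⟨m, rfl⟩ := exists_int_eq_of_smul_mem_intLattice hprim h
  obtain ⟨m', hm'⟩ := exists_int_eq_of_smul_mem_intLattice hprim h'
  have hmm' : m * m' = 1 := by
    have : (m : ℝ) * m' = 1 := by rw [← hm', mul_inv_cancel₀ hr.ne']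
    exact_mod_cast this
  rw [Int.eq_one_of_mul_eq_one_right (Int.cast_pos.1 hr).le hmm', Int.cast_one]

end Lattice

theorem fixes_cusp_of_maps_horoball_general (n : ℕ) (z : Fin (n + 1) → ℤ)
    (hprim : Finset.univ.gcd z = 1)
    (hnull : B n (toReal n z) (toReal n z) = 0)
    (hfut : 0 < z 0)
    (g : (Fin (n + 1) → ℝ) ≃ₗ[ℝ] (Fin (n + 1) → ℝ)) (hg : InOplusZ n g)
    (hmaps : ∀ x ∈ horoball n (toReal n z), g x ∈ horoball n (toReal n z)) :
    g (toReal n z) = toReal n z := by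
  obtain ⟨hB, hL, hC⟩ := hg
  set e := toReal n z
  have he0 : 0 < e 0 := Int.cast_pos.2 hfut
  have heL : e ∈ intLattice n := fun i => ⟨z i, rfl⟩
  have hf : B n (g e) (g e) = 0 := (hB e e).trans hnull
  have hf0 : 0 < g e 0 :=
    apply_zero_pos_of_null g (fun x hx => hC ▸ Set.mem_image_of_mem g hx) hnull he0 hf
  have hsub : horoball n (g e) ⊆ horoball n e := by
    intro y hy
    obtain ⟨x, rfl⟩ := g.surjective y
    exact hmaps x ((apply_mem_horoball_iff g hB hC).1 hy)
  have hc : B n e (g e) = 0 := le_antisymm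
    (not_lt.1 fun hc => not_horoball_subset_horoball hnull hf he0 hf0 hc hsub)
    (B_nonneg_of_null hnull hf he0 hf0)
  set r := g e 0 / e 0
  have hr : 0 < r := div_pos hf0 he0
  have hge : g e = r • e := eq_smul_of_B_eq_zero hnull hf he0.ne' hc
  have hr1 : r = 1 := by
    refine eq_one_of_smul_mem_intLattice hprim hr (hge ▸ hL ▸ Set.mem_image_of_mem g heL) ?_
    rw [← g.injective.mem_set_image, hL, map_smul, hge, inv_smul_smul₀ hr.ne']
    exact heL
  rw [hge, hr1, one_smul]

/-- If `g ∈ O⁺(ℤ)` maps the horoball `U_e` of a primitive integral future-pointing null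
vector `e` into itself, then `g(e) = e`. -/
theorem fixes_cusp_of_maps_horoball (n : ℕ) (hn : 1 ≤ n) (z : Fin (n + 1) → ℤ)
    (hprim : Finset.univ.gcd z = 1)
    (hnull : B n (toReal n z) (toReal n z) = 0)
    (hfut : 0 < z 0)
    (g : (Fin (n + 1) → ℝ) ≃ₗ[ℝ] (Fin (n + 1) → ℝ)) (hg : InOplusZ n g)
    (hmaps : ∀ x ∈ horoball n (toReal n z), g x ∈ horoball n (toReal n z)) :
    g (toReal n z) = toReal n z :=
  fixes_cusp_of_maps_horoball_general n z hprim hnull hfut g hg hmaps
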